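/- Let a, b, c, d ∈ ℂ and n ∈ ℕ, and let W̃_n(x | a,b,c,d) denote the rescaled Wilson polynomial, a polynomial in x². Then for every x ∈ ℂ with x(x−1)(x+1) ≠ 0, (μ*^{(a,b,c,d)}(μ^{(a,b,c,d)} W̃_n(·|a,b,c,d)))(x) = [n(n+a+b+c+d−1) + (c+d)(a+b−1)]·W̃_n(x|a,b,c,d). That is, the rescaled Wilson polynomials are eigenfunctions of Q = μ*^{(a,b,c,d)}μ^{(a,b,c,d)} with eigenvalue n(n+a+b+c+d−1) + (c+d)(a+b−1) = (n+a+b−1)(n+c+d). -/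

import Mathlib

/-!
Write `W̃_n = (a+b)_n (a+c)_n (a+d)_n ∑_k c_k φ_k` with `φ_k(x) = (a - x/2)_k (a + x/2)_k`.
A direct computation shows that `μ* μ = D + (c+d)(a+b-1)`, where `D` is Wilson's difference
operator, and `D` acts triangularly on the `φ_k`:
`D φ_{k+1} = (k+1)(k+s) φ_{k+1} - (k+1)(a+b+k)(a+c+k)(a+d+k) φ_k` with `s = a+b+c+d`.
The ratio `c_{k+1}/c_k` of the hypergeometric coefficients is exactly what makes the lower terms
of `∑_k c_k (D - n(n+s-1)) φ_k` telescope to zero.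
-/

noncomputable section

/-- The S–Heun lowering operator L on the quadratic grid λ_x = x². -/
def opL (f : ℂ → ℂ) : ℂ → ℂ := fun x => (f (x + 1) - f (x - 1)) / (4 * x)

/-- The stabilizing S–Heun operator M₁ on the quadratic grid. -/
def opM1 (f : ℂ → ℂ) : ℂ → ℂ :=
  fun x => ((2 * x - 1) * f (x + 1) + (2 * x + 1) * f (x - 1)) / (4 * x)

/-- The stabilizing S–Heun operator M₂ on the quadratic grid. -/
def opM2 (f : ℂ → ℂ) : ℂ → ℂ :=
  fun x => ((x ^ 2 + (x - 1) ^ 2) * f (x + 1) - ((x + 1) ^ 2 + x ^ 2) * f (x - 1)) / (4 * x)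

/-- The raising S–Heun operator R₁ = λ_x M₁ on the quadratic grid. -/
def opR1 (f : ℂ → ℂ) : ℂ → ℂ := fun x => x ^ 2 * opM1 f x

/-- The raising S–Heun operator R₂ = λ_x M₂ on the quadratic grid. -/
def opR2 (f : ℂ → ℂ) : ℂ → ℂ := fun x => x ^ 2 * opM2 f x

/-- The contiguity operator μ^{(a,b,c,d)} = uL + vM₁ + ½M₂,
u = ((4a−1)(4b−1)−1)/4, v = a+b−½. -/
def opMu (a b c d : ℂ) (f : ℂ → ℂ) : ℂ → ℂ :=
  fun x => (((4 * a - 1) * (4 * b - 1) - 1) / 4) * opL f x + (a + b - 1 / 2) * opM1 f x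
    + (1 / 2) * opM2 f x

/-- The contiguity operator μ*^{(a,b,c,d)} = μ^{(c+½,d+½,a−½,b−½)}. -/
def opMuStar (a b c d : ℂ) : (ℂ → ℂ) → ℂ → ℂ :=
  opMu (c + 1 / 2) (d + 1 / 2) (a - 1 / 2) (b - 1 / 2)

/-- The rescaled Wilson polynomial W̃_n(x | a,b,c,d) = W_n(−x²/4 | a,b,c,d),
as a function of x. -/
def wilsonT (n : ℕ) (a b c d x : ℂ) : ℂ :=
  (ascPochhammer ℂ n).eval (a + b) * (ascPochhammer ℂ n).eval (a + c) *
    (ascPochhammer ℂ n).eval (a + d) *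
    ∑ k ∈ Finset.range (n + 1),
      ((ascPochhammer ℂ k).eval (-(n : ℂ)) *
          (ascPochhammer ℂ k).eval ((n : ℂ) + a + b + c + d - 1) /
          ((ascPochhammer ℂ k).eval (a + b) * (ascPochhammer ℂ k).eval (a + c) *
            (ascPochhammer ℂ k).eval (a + d) * (Nat.factorial k : ℂ))) *
        ∏ j ∈ Finset.range k, ((a + (j : ℂ)) ^ 2 - x ^ 2 / 4)

open Polynomial Finset

theorem ascPochhammer_succ_eval_left {S : Type*} [CommSemiring S] (n : ℕ) (z : S) :
    (ascPochhammer S (n + 1)).eval z = z * (ascPochhammer S n).eval (z + 1) := by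
  rw [ascPochhammer_succ_left, eval_mul, eval_X, eval_comp, eval_add, eval_X, eval_one]

theorem ascPochhammer_eval_ne_zero_of_le {R : Type*} [CommRing R] [IsDomain R] {k n : ℕ}
    {z : R} (hkn : k ≤ n) (h : (ascPochhammer R n).eval z ≠ 0) :
    (ascPochhammer R k).eval z ≠ 0 := by
  rw [Ne, ascPochhammer_eval_eq_zero_iff] at h ⊢
  rintro ⟨j, hjk, hj⟩
  exact h ⟨j, hjk.trans_le hkn, hj⟩

def wilsonBasis (a : ℂ) (k : ℕ) (x : ℂ) : ℂ :=
  (ascPochhammer ℂ k).eval (a - x / 2) * (ascPochhammer ℂ k).eval (a + x / 2)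

theorem prod_range_eq_wilsonBasis (a x : ℂ) (k : ℕ) :
    ∏ j ∈ range k, ((a + j) ^ 2 - x ^ 2 / 4) = wilsonBasis a k x := by
  induction k with
  | zero => simp [wilsonBasis]
  | succ k ih =>
    rw [prod_range_succ, ih, wilsonBasis, wilsonBasis, ascPochhammer_succ_eval,
      ascPochhammer_succ_eval]
    ring

theorem wilsonBasis_succ (a : ℂ) (k : ℕ) (x : ℂ) :
    wilsonBasis a (k + 1) x = wilsonBasis a k x * ((a + k) ^ 2 - x ^ 2 / 4) := by
  rw [← prod_range_eq_wilsonBasis, ← prod_range_eq_wilsonBasis, prod_range_succ]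

theorem wilsonBasis_neg (a : ℂ) (k : ℕ) (x : ℂ) : wilsonBasis a k (-x) = wilsonBasis a k x := by
  rw [← prod_range_eq_wilsonBasis, ← prod_range_eq_wilsonBasis, neg_sq]

theorem mul_wilsonBasis_succ_add_two_sub (a : ℂ) (m : ℕ) (x : ℂ) :
    (a + x / 2) * (wilsonBasis a (m + 1) (x + 2) - wilsonBasis a (m + 1) x)
      = -((m + 1) * (x + 1) * (a + x / 2 + m)) * wilsonBasis a m x := by
  simp only [wilsonBasis]
  rw [show a - (x + 2) / 2 = a - x / 2 - 1 by ring,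
    show a + (x + 2) / 2 = a + x / 2 + 1 by ring]
  set u := a - x / 2
  set v := a + x / 2
  have hv : v * (ascPochhammer ℂ m).eval (v + 1) = (ascPochhammer ℂ m).eval v * (v + m) := by
    rw [← ascPochhammer_succ_eval_left, ascPochhammer_succ_eval]
  rw [ascPochhammer_succ_eval_left, sub_add_cancel, ascPochhammer_succ_eval _ (v + 1),
    ascPochhammer_succ_eval _ u, ascPochhammer_succ_eval _ v]
  have huv : u - v = -x := by ring
  linear_combination ((u - 1) * (ascPochhammer ℂ m).eval u * (v + 1 + m)) * hv
    + ((m + 1) * (ascPochhammer ℂ m).eval u * (ascPochhammer ℂ m).eval v * (v + m)) * huv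

theorem mul_wilsonBasis_succ_sub_two_sub (a : ℂ) (m : ℕ) (x : ℂ) :
    (a - x / 2) * (wilsonBasis a (m + 1) (x - 2) - wilsonBasis a (m + 1) x)
      = (m + 1) * (x - 1) * (a - x / 2 + m) * wilsonBasis a m x := by
  have h := mul_wilsonBasis_succ_add_two_sub a m (-x)
  rw [show -x + 2 = -(x - 2) by ring] at h
  simp only [wilsonBasis_neg] at h
  linear_combination h

/-- Wilson's operator `B(y) (f(y+i) - f(y)) + B(-y) (f(y-i) - f(y))`,
`B(y) = ∏_e (e - iy) / (2iy (2iy - 1))`, written in the variable `x = -2iy` of `W̃_n`. -/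
def wilsonDiff (a b c d : ℂ) (f : ℂ → ℂ) (x : ℂ) : ℂ :=
  (a + x / 2) * (b + x / 2) * (c + x / 2) * (d + x / 2) / (x * (x + 1)) * (f (x + 2) - f x)
    + (a - x / 2) * (b - x / 2) * (c - x / 2) * (d - x / 2) / (x * (x - 1)) * (f (x - 2) - f x)

theorem wilsonDiff_const_mul_sum (a b c d C : ℂ) (s : Finset ℕ) (w : ℕ → ℂ)
    (g : ℕ → ℂ → ℂ) (x : ℂ) :
    wilsonDiff a b c d (fun y => C * ∑ k ∈ s, w k * g k y) x
      = C * ∑ k ∈ s, w k * wilsonDiff a b c d (g k) x := by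
  simp only [wilsonDiff, mul_sum, ← sum_sub_distrib, ← sum_add_distrib]
  exact sum_congr rfl fun k _ => by ring

theorem wilsonDiff_wilsonBasis_zero (a b c d x : ℂ) :
    wilsonDiff a b c d (wilsonBasis a 0) x = 0 := by
  simp [wilsonDiff, wilsonBasis]

theorem wilsonDiff_wilsonBasis_succ (a b c d : ℂ) (m : ℕ) {x : ℂ} (hx : x ≠ 0)
    (hx₁ : x - 1 ≠ 0) (hx₂ : x + 1 ≠ 0) :
    wilsonDiff a b c d (wilsonBasis a (m + 1)) x
      = (m + 1) * (m + a + b + c + d) * wilsonBasis a (m + 1) x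
        - (m + 1) * (a + b + m) * (a + c + m) * (a + d + m) * wilsonBasis a m x := by
  have hsplit : wilsonDiff a b c d (wilsonBasis a (m + 1)) x
      = (b + x / 2) * (c + x / 2) * (d + x / 2) / (x * (x + 1))
          * ((a + x / 2) * (wilsonBasis a (m + 1) (x + 2) - wilsonBasis a (m + 1) x))
        + (b - x / 2) * (c - x / 2) * (d - x / 2) / (x * (x - 1))
          * ((a - x / 2) * (wilsonBasis a (m + 1) (x - 2) - wilsonBasis a (m + 1) x)) := by
    rw [wilsonDiff]
    ring
  rw [hsplit, mul_wilsonBasis_succ_add_two_sub, mul_wilsonBasis_succ_sub_two_sub,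
    wilsonBasis_succ]
  field_simp
  ring

def wilsonCoeff (n : ℕ) (a b c d : ℂ) (k : ℕ) : ℂ :=
  (ascPochhammer ℂ k).eval (-(n : ℂ)) *
      (ascPochhammer ℂ k).eval ((n : ℂ) + a + b + c + d - 1) /
    ((ascPochhammer ℂ k).eval (a + b) * (ascPochhammer ℂ k).eval (a + c) *
      (ascPochhammer ℂ k).eval (a + d) * (Nat.factorial k : ℂ))

theorem wilsonT_eq_sum (n : ℕ) (a b c d : ℂ) :
    wilsonT n a b c d = fun x => (ascPochhammer ℂ n).eval (a + b) *
      (ascPochhammer ℂ n).eval (a + c) * (ascPochhammer ℂ n).eval (a + d) *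
        ∑ k ∈ range (n + 1), wilsonCoeff n a b c d k * wilsonBasis a k x := by
  funext x
  simp only [wilsonT, prod_range_eq_wilsonBasis]
  rfl

theorem wilsonCoeff_succ_mul {n k : ℕ} (a b c d : ℂ) (hk : k < n)
    (hab : (ascPochhammer ℂ n).eval (a + b) ≠ 0) (hac : (ascPochhammer ℂ n).eval (a + c) ≠ 0)
    (had : (ascPochhammer ℂ n).eval (a + d) ≠ 0) :
    wilsonCoeff n a b c d (k + 1) * ((k + 1) * (a + b + k) * (a + c + k) * (a + d + k))
      = wilsonCoeff n a b c d k * ((k - n) * (k + n + a + b + c + d - 1)) := by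
  obtain ⟨hb, hb'⟩ := mul_ne_zero_iff.mp <|
    ascPochhammer_succ_eval k (a + b) ▸ ascPochhammer_eval_ne_zero_of_le hk hab
  obtain ⟨hc, hc'⟩ := mul_ne_zero_iff.mp <|
    ascPochhammer_succ_eval k (a + c) ▸ ascPochhammer_eval_ne_zero_of_le hk hac
  obtain ⟨hd, hd'⟩ := mul_ne_zero_iff.mp <|
    ascPochhammer_succ_eval k (a + d) ▸ ascPochhammer_eval_ne_zero_of_le hk had
  rw [wilsonCoeff, wilsonCoeff, ascPochhammer_succ_eval _ (-(n : ℂ)), ascPochhammer_succ_eval,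
    ascPochhammer_succ_eval _ (a + b), ascPochhammer_succ_eval _ (a + c),
    ascPochhammer_succ_eval _ (a + d), Nat.factorial_succ, Nat.cast_mul]
  have hk₁ : (k : ℂ) + 1 ≠ 0 := by exact_mod_cast k.succ_ne_zero
  have hfac : (k.factorial : ℂ) ≠ 0 := by exact_mod_cast k.factorial_ne_zero
  push_cast
  field_simp
  ring

theorem sum_wilsonCoeff_mul_wilsonDiff_wilsonBasis (a b c d : ℂ) (n : ℕ)
    (hab : (ascPochhammer ℂ n).eval (a + b) ≠ 0) (hac : (ascPochhammer ℂ n).eval (a + c) ≠ 0)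
    (had : (ascPochhammer ℂ n).eval (a + d) ≠ 0) {x : ℂ} (hx : x ≠ 0) (hx₁ : x - 1 ≠ 0)
    (hx₂ : x + 1 ≠ 0) :
    ∑ k ∈ range (n + 1), wilsonCoeff n a b c d k * wilsonDiff a b c d (wilsonBasis a k) x
      = n * (n + a + b + c + d - 1) *
          ∑ k ∈ range (n + 1), wilsonCoeff n a b c d k * wilsonBasis a k x := by
  set F : ℕ → ℂ := fun k =>
    wilsonCoeff n a b c d k * ((k - n) * (k + n + a + b + c + d - 1)) * wilsonBasis a k x
  -- `(k - n)(k + n + s - 1) = k (k + s - 1) - n (n + s - 1)`, so the sum telescopes to `F n`.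
  have hzero : wilsonCoeff n a b c d 0 * wilsonDiff a b c d (wilsonBasis a 0) x
      - n * (n + a + b + c + d - 1) * (wilsonCoeff n a b c d 0 * wilsonBasis a 0 x) = F 0 := by
    simp only [F, wilsonDiff_wilsonBasis_zero]
    ring
  have hsucc : ∀ k ∈ range n,
      wilsonCoeff n a b c d (k + 1) * wilsonDiff a b c d (wilsonBasis a (k + 1)) x
        - n * (n + a + b + c + d - 1) *
            (wilsonCoeff n a b c d (k + 1) * wilsonBasis a (k + 1) x)
        = F (k + 1) - F k := by
    intro k hk
    simp only [F, wilsonDiff_wilsonBasis_succ a b c d k hx hx₁ hx₂]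
    push_cast
    linear_combination
      (-wilsonBasis a k x) * wilsonCoeff_succ_mul a b c d (mem_range.mp hk) hab hac had
  have htop : F n = 0 := by simp [F]
  rw [← sub_eq_zero, mul_sum, ← sum_sub_distrib, sum_range_succ', sum_congr rfl hsucc,
    sum_range_sub, hzero, htop]
  ring

theorem wilsonDiff_wilsonT (a b c d : ℂ) (n : ℕ) {x : ℂ} (hx : x ≠ 0) (hx₁ : x - 1 ≠ 0)
    (hx₂ : x + 1 ≠ 0) :
    wilsonDiff a b c d (wilsonT n a b c d) x
      = n * (n + a + b + c + d - 1) * wilsonT n a b c d x := by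
  rw [wilsonT_eq_sum, wilsonDiff_const_mul_sum]
  by_cases hP : (ascPochhammer ℂ n).eval (a + b) * (ascPochhammer ℂ n).eval (a + c) *
      (ascPochhammer ℂ n).eval (a + d) = 0
  · simp [hP]
  · simp only [mul_ne_zero_iff] at hP
    rw [sum_wilsonCoeff_mul_wilsonDiff_wilsonBasis a b c d n hP.1.1 hP.1.2 hP.2 hx hx₁ hx₂]
    ring

theorem opMu_apply (a b c d : ℂ) (f : ℂ → ℂ) (x : ℂ) :
    opMu a b c d f x
      = ((x + 2 * a - 1) * (x + 2 * b - 1) * f (x + 1)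
          - (x - 2 * a + 1) * (x - 2 * b + 1) * f (x - 1)) / (4 * x) := by
  simp only [opMu, opL, opM1, opM2]
  ring

theorem opMuStar_opMu_apply (a b c d : ℂ) (f : ℂ → ℂ) {x : ℂ} (hx : x ≠ 0) (hx₁ : x - 1 ≠ 0)
    (hx₂ : x + 1 ≠ 0) :
    opMuStar a b c d (opMu a b c d f) x
      = wilsonDiff a b c d f x + (c + d) * (a + b - 1) * f x := by
  rw [opMuStar, opMu_apply, opMu_apply, opMu_apply, wilsonDiff,
    show x + 1 + 1 = x + 2 by ring, show x - 1 - 1 = x - 2 by ring, add_sub_cancel_right,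
    sub_add_cancel]
  field_simp
  ring

theorem stmt10 (a b c d : ℂ) (n : ℕ) :
    ∀ x : ℂ, x * (x - 1) * (x + 1) ≠ 0 →
      opMuStar a b c d (opMu a b c d (wilsonT n a b c d)) x
        = ((n : ℂ) * ((n : ℂ) + a + b + c + d - 1) + (c + d) * (a + b - 1))
            * wilsonT n a b c d x := by
  intro x hx
  simp only [mul_ne_zero_iff] at hx
  obtain ⟨⟨hx₀, hx₁⟩, hx₂⟩ := hx
  rw [opMuStar_opMu_apply a b c d _ hx₀ hx₁ hx₂, wilsonDiff_wilsonT a b c d n hx₀ hx₁ hx₂]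
  ring
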